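/- arXiv:2109.09200 — 3 statements merged into one kernel-verified Lean document; each statement's English description precedes it below -/
import Mathlib

section
/- Let G be a graph on vertex set V. Two tubes t, t' of G (connected induced subgraphs, identified with their vertex sets) are exchangeable in the nested complex of G if and only if t' has a unique neighbor v in t \ t' and t has a unique neighbor v' in t' \ t. (Here a vertex u is a neighbor of a tube s if u ∉ s and u is adjacent in G to some vertex of s.) -/
open scoped Classical

variable {V : Type*} [Fintype V] [DecidableEq V]

/-- A tube of `G`: a nonempty vertex subset inducing a connected subgraph. -/
def IsTube (G : SimpleGraph V) (t : Finset V) : Prop :=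
  t.Nonempty ∧ (G.induce (t : Set V)).Connected

/-- The set of all tubes of `G`. -/
noncomputable def tubes (G : SimpleGraph V) : Finset (Finset V) :=
  Finset.univ.powerset.filter (fun t => IsTube G t)

/-- Compatibility of tubes: nested, or disjoint with non-tube union. -/
def Compatible (G : SimpleGraph V) (t t' : Finset V) : Prop :=
  t ⊆ t' ∨ t' ⊆ t ∨ (t ∩ t' = ∅ ∧ ¬ IsTube G (t ∪ t'))

/-- A tubing on `G`: pairwise compatible tubes containing all connected components
(that is, all inclusion-maximal tubes). -/
def IsTubing (G : SimpleGraph V) (T : Finset (Finset V)) : Prop :=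
  (∀ t ∈ T, IsTube G t) ∧
  (∀ t ∈ T, ∀ t' ∈ T, Compatible G t t') ∧
  (∀ K : Finset V, IsTube G K → (∀ t : Finset V, IsTube G t → K ⊆ t → K = t) → K ∈ T)

/-- A maximal tubing on `G`. -/
def IsMaxTubing (G : SimpleGraph V) (T : Finset (Finset V)) : Prop :=
  IsTubing G T ∧ ∀ T', IsTubing G T' → T ⊆ T' → T = T'

/-- Two tubes are exchangeable if two maximal tubings differ exactly by them. -/
def ExchangeableT (G : SimpleGraph V) (t t' : Finset V) : Prop :=
  t ≠ t' ∧ ∃ T T', IsMaxTubing G T ∧ IsMaxTubing G T' ∧ t ∈ T ∧ t' ∈ T' ∧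
    T.erase t = T'.erase t'

/-- `u` is a neighbor of the vertex set `s`: `u ∉ s` and `u` is adjacent to some vertex of `s`. -/
def NbrOf (G : SimpleGraph V) (s : Finset V) (u : V) : Prop :=
  u ∉ s ∧ ∃ x ∈ s, G.Adj u x

/-- Connected components of the induced subgraph on `U`:
inclusion-maximal tubes contained in `U`. -/
noncomputable def gccSet (G : SimpleGraph V) (U : Finset V) : Finset (Finset V) :=
  (tubes G).filter (fun K => K ⊆ U ∧ ∀ C : Finset V, IsTube G C → C ⊆ U → K ⊆ C → K = C)

/-- Characteristic vector of a subset of `V` in `ℝ^V`. -/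
def chi (S : Finset V) : V → ℝ := fun v => if v ∈ S then 1 else 0

/-- `w` is a non-disconnecting vertex of the set `s`. -/
def NonDisc (G : SimpleGraph V) (s : Finset V) (w : V) : Prop :=
  w ∈ s ∧ (s.erase w = ∅ ∨ IsTube G (s.erase w))

/-!
In a maximal tubing `T` every tube `s` has exactly one *free* vertex, i.e. a vertex of `s` lying
in no member of `T` strictly inside `s`. Free vertices of distinct tubes are distinct, which gives
`|T| ≤ |V|`; and if `x ≠ y` were both free in `s`, the component of `y` in `s \ {x}` could be
added to `T`.

If `T \ {t} = T' \ {t'}` for maximal tubings `T ∋ t` and `T' ∋ t'`, then `t` and `t'` are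
incompatible, since otherwise `t'` could be added to `T`; so `t` has a neighbour in `t' \ t`.
The smallest member `b` of `T` strictly containing `t` also contains `t'`, and every neighbour of
`t` inside `b` is free in `b`, so that neighbour is unique.

Conversely, let `v ∈ t \ t'` and `v' ∈ t' \ t` be the unique neighbours. Rank the vertices as
`(t ∪ t') \ {v, v'}`, then `v`, then `v'`, then the rest, and let each vertex span its component
among the vertices of rank at most its own. This is a maximal tubing containing `t` (spanned by
`v`) and `t ∪ t'` (spanned by `v'`). Exchanging `v` and `v'` in the ranking turns these two tubes
into `t ∪ t'` and `t'` and leaves all the other tubes unchanged.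
-/

section Tubes

variable {α : Type*} {G : SimpleGraph α} {a b c d s t t' : Finset α} {x y : α}

def Separated (G : SimpleGraph α) (a b : Finset α) : Prop :=
  Disjoint a b ∧ ∀ x ∈ a, ∀ y ∈ b, ¬ G.Adj x y

theorem Separated.mono (h : Separated G a b) (hca : c ⊆ a) (hdb : d ⊆ b) : Separated G c d :=
  ⟨h.1.mono hca hdb, fun x hx y hy => h.2 x (hca hx) y (hdb hy)⟩

theorem isTube_singleton (G : SimpleGraph α) (x : α) : IsTube G {x} :=
  ⟨Finset.singleton_nonempty x, by
    rw [Finset.coe_singleton, SimpleGraph.induce_singleton_eq_top]; exact SimpleGraph.connected_top⟩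

theorem IsTube.exists_boundary_adj (hs : IsTube G s) (A : Set α) (hx : x ∈ s) (hy : y ∈ s)
    (hxA : x ∈ A) (hyA : y ∉ A) : ∃ u ∈ s, ∃ w ∈ s, u ∈ A ∧ w ∉ A ∧ G.Adj u w := by
  obtain ⟨p⟩ := hs.2.preconnected ⟨x, hx⟩ ⟨y, hy⟩
  obtain ⟨d, -, hdA, hdA'⟩ := p.exists_boundary_dart {z | z.1 ∈ A} hxA hyA
  exact ⟨_, d.fst.2, _, d.snd.2, hdA, hdA', d.adj⟩

variable [DecidableEq α]

theorem IsTube.union (hs : IsTube G s) (ht : IsTube G t) (h : ¬ Separated G s t) :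
    IsTube G (s ∪ t) := by
  refine ⟨hs.1.mono Finset.subset_union_left, ?_⟩
  rw [Finset.coe_union]
  by_cases hst : Disjoint s t
  · obtain ⟨x, hx, y, hy, hxy⟩ : ∃ x ∈ s, ∃ y ∈ t, G.Adj x y := by
      simpa [Separated, hst] using h
    exact SimpleGraph.connected_induce_union hs.2.preconnected ht.2.preconnected
      (Finset.mem_coe.2 hx) (Finset.mem_coe.2 hy) hxy
  · obtain ⟨x, hxs, hxt⟩ := Finset.not_disjoint_iff.1 hst
    exact SimpleGraph.induce_union_connected hs.2.preconnected ht.2.preconnected ⟨x, hxs, hxt⟩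

theorem Separated.not_isTube_union (h : Separated G s t) (hs : s.Nonempty) (ht : t.Nonempty) :
    ¬ IsTube G (s ∪ t) := by
  intro hst
  obtain ⟨x, hx⟩ := hs
  obtain ⟨y, hy⟩ := ht
  obtain ⟨u, -, w, hw, hus, hws, huw⟩ := hst.exists_boundary_adj (s : Set α)
    (Finset.mem_union_left t hx) (Finset.mem_union_right s hy) hx (Finset.disjoint_right.1 h.1 hy)
  exact h.2 u hus w ((Finset.mem_union.1 hw).resolve_left hws) huw

theorem Compatible.symm (h : Compatible G s t) : Compatible G t s := by
  rcases h with h | h | ⟨h, h'⟩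
  · exact Or.inr (Or.inl h)
  · exact Or.inl h
  · exact Or.inr (Or.inr ⟨by rwa [Finset.inter_comm], by rwa [Finset.union_comm]⟩)

theorem compatible_iff (hs : IsTube G s) (ht : IsTube G t) :
    Compatible G s t ↔ s ⊆ t ∨ t ⊆ s ∨ Separated G s t := by
  refine or_congr_right (or_congr_right ⟨fun ⟨_, hu⟩ => ?_, fun h => ?_⟩)
  · by_contra h
    exact hu (hs.union ht h)
  · exact ⟨Finset.disjoint_iff_inter_eq_empty.1 h.1, h.not_isTube_union hs.1 ht.1⟩

theorem exists_nbrOf_of_not_compatible (ht : IsTube G t) (ht' : IsTube G t')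
    (h : ¬ Compatible G t t') : ∃ w ∈ t' \ t, NbrOf G t w := by
  simp only [compatible_iff ht ht', not_or] at h
  obtain ⟨-, ht't, hsep⟩ := h
  obtain ⟨y, hyt', hyt⟩ := Finset.not_subset.1 ht't
  by_cases hdisj : Disjoint t t'
  · obtain ⟨x, hx, w, hw, hxw⟩ : ∃ x ∈ t, ∃ w ∈ t', G.Adj x w := by
      simpa [Separated, hdisj] using hsep
    have hwt : w ∉ t := Finset.disjoint_right.1 hdisj hw
    exact ⟨w, Finset.mem_sdiff.2 ⟨hw, hwt⟩, hwt, x, hx, hxw.symm⟩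
  · obtain ⟨x, hxt, hxt'⟩ := Finset.not_disjoint_iff.1 hdisj
    obtain ⟨u, -, w, hw, hut, hwt, huw⟩ := ht'.exists_boundary_adj (t : Set α) hxt' hyt' hxt hyt
    exact ⟨w, Finset.mem_sdiff.2 ⟨hw, hwt⟩, hwt, u, hut, huw.symm⟩

end Tubes

section Components

variable {α : Type*} [DecidableEq α] {G : SimpleGraph α} {s t a X : Finset α} {x : α}

/-- The connected component of `x` in `G[X]`, as the union of all tubes inside `X` through `x`;
it is empty when `x ∉ X`. -/
noncomputable def componentIn (G : SimpleGraph α) (X : Finset α) (x : α) : Finset α :=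
  (X.powerset.filter fun s => IsTube G s ∧ x ∈ s).sup id

theorem subset_componentIn (hs : IsTube G s) (hsX : s ⊆ X) (hx : x ∈ s) :
    s ⊆ componentIn G X x :=
  Finset.le_sup (f := id) (Finset.mem_filter.2 ⟨Finset.mem_powerset.2 hsX, hs, hx⟩)

theorem componentIn_subset : componentIn G X x ⊆ X :=
  Finset.sup_le fun _ hs => Finset.mem_powerset.1 (Finset.mem_filter.1 hs).1

theorem mem_componentIn (hx : x ∈ X) : x ∈ componentIn G X x :=
  Finset.singleton_subset_iff.1 <| subset_componentIn (isTube_singleton G x)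
    (Finset.singleton_subset_iff.2 hx) (Finset.mem_singleton_self x)

theorem isTube_componentIn (hx : x ∈ X) : IsTube G (componentIn G X x) := by
  refine ⟨⟨x, mem_componentIn hx⟩, SimpleGraph.induce_connected_of_patches x
    (Finset.mem_coe.2 (mem_componentIn hx)) fun {y} hy => ?_⟩
  obtain ⟨s, hsX, hys⟩ := Finset.mem_sup.1 (Finset.mem_coe.1 hy)
  obtain ⟨hsX, hs, hxs⟩ := Finset.mem_filter.1 hsX
  exact ⟨s, Finset.coe_subset.2 (subset_componentIn hs (Finset.mem_powerset.1 hsX) hxs), hxs,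
    hys, hs.2.preconnected _ _⟩

theorem componentIn_of_isTube (hX : IsTube G X) (hx : x ∈ X) : componentIn G X x = X :=
  componentIn_subset.antisymm (subset_componentIn hX subset_rfl hx)

theorem componentIn_eq (ht : IsTube G t) (htX : t ⊆ X) (hx : x ∈ t)
    (hclosed : ∀ w ∈ X, ¬ NbrOf G t w) : componentIn G X x = t := by
  refine Finset.Subset.antisymm ?_ (subset_componentIn ht htX hx)
  by_contra hsub
  obtain ⟨y, hy, hyt⟩ := Finset.not_subset.1 hsub
  obtain ⟨u, -, w, hw, hut, hwt, huw⟩ := (isTube_componentIn (htX hx)).exists_boundary_adj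
    (t : Set α) (subset_componentIn ht htX hx hx) hy hx hyt
  exact hclosed w (componentIn_subset hw) ⟨hwt, u, hut, huw.symm⟩

theorem compatible_componentIn (ha : IsTube G a) (haX : a ⊆ X) (hx : x ∈ X) :
    Compatible G a (componentIn G X x) := by
  have hC := isTube_componentIn (G := G) hx
  by_cases hsep : Separated G a (componentIn G X x)
  · exact (compatible_iff ha hC).2 (Or.inr (Or.inr hsep))
  · exact Or.inl (Finset.subset_union_left.trans (subset_componentIn (ha.union hC hsep)
      (Finset.union_subset haX componentIn_subset)
      (Finset.mem_union_right a (mem_componentIn hx))))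

end Components

section FreeVertices

variable {α : Type*} [DecidableEq α] {G : SimpleGraph α} {T : Finset (Finset α)}
  {s s' t b : Finset α} {x w : α}

theorem IsTubing.insert (hT : IsTubing G T) (hs : IsTube G s)
    (hcompat : ∀ a ∈ T, Compatible G s a) : IsTubing G (insert s T) := by
  refine ⟨fun a ha => ?_, fun a ha a' ha' => ?_, fun K hK hmax => ?_⟩
  · rcases Finset.mem_insert.1 ha with rfl | haT
    exacts [hs, hT.1 a haT]
  · rcases Finset.mem_insert.1 ha with rfl | haT <;>
      rcases Finset.mem_insert.1 ha' with rfl | ha'T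
    exacts [Or.inl subset_rfl, hcompat a' ha'T, (hcompat a haT).symm, hT.2.1 a haT a' ha'T]
  · exact Finset.mem_insert_of_mem (hT.2.2 K hK hmax)

theorem IsMaxTubing.mem_of_forall_compatible (hT : IsMaxTubing G T) (hs : IsTube G s)
    (hcompat : ∀ a ∈ T, Compatible G s a) : s ∈ T := by
  rw [hT.2 _ (hT.1.insert hs hcompat) (Finset.subset_insert s T)]
  exact Finset.mem_insert_self s T

noncomputable def freeVerts (T : Finset (Finset α)) (s : Finset α) : Finset α :=
  s.filter fun x => ∀ a ∈ T, a ⊂ s → x ∉ a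

theorem mem_freeVerts : x ∈ freeVerts T s ↔ x ∈ s ∧ ∀ a ∈ T, a ⊂ s → x ∉ a :=
  Finset.mem_filter

/-- Otherwise the maximal members of `T` strictly inside `s` would be pairwise separated tubes
covering the tube `s`. -/
theorem IsTubing.freeVerts_nonempty (hT : IsTubing G T) (hs : s ∈ T) :
    (freeVerts T s).Nonempty := by
  by_contra hempty
  have hcover : ∀ x ∈ s, ∃ m, Maximal (· ∈ T.filter (· ⊂ s)) m ∧ x ∈ m := by
    intro x hx
    obtain ⟨a, haT, has, hxa⟩ : ∃ a ∈ T, a ⊂ s ∧ x ∈ a := by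
      by_contra h
      exact hempty ⟨x, mem_freeVerts.2 ⟨hx, fun a haT has hxa => h ⟨a, haT, has, hxa⟩⟩⟩
    obtain ⟨m, ham, hm⟩ := (T.filter (· ⊂ s)).exists_le_maximal (Finset.mem_filter.2 ⟨haT, has⟩)
    exact ⟨m, hm, ham hxa⟩
  obtain ⟨x, hx⟩ := (hT.1 s hs).1
  obtain ⟨m, hm, hxm⟩ := hcover x hx
  obtain ⟨hmT, hms⟩ := Finset.mem_filter.1 hm.prop
  obtain ⟨y, hys, hym⟩ := Finset.exists_of_ssubset hms
  obtain ⟨u, hu, w, hws, hum, hwm, huw⟩ :=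
    (hT.1 s hs).exists_boundary_adj (m : Set α) hx hys hxm hym
  obtain ⟨m', hm', hwm'⟩ := hcover w hws
  obtain ⟨hm'T, -⟩ := Finset.mem_filter.1 hm'.prop
  rcases (compatible_iff (hT.1 m hmT) (hT.1 m' hm'T)).1 (hT.2.1 m hmT m' hm'T) with h | h | h
  · exact hwm (hm.eq_of_le hm'.prop h ▸ hwm')
  · exact hwm (hm'.eq_of_le hm.prop h ▸ hwm')
  · exact h.2 u hum w hwm' huw

theorem IsTubing.disjoint_freeVerts (hT : IsTubing G T) (hs : s ∈ T) (hs' : s' ∈ T)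
    (hne : s ≠ s') : Disjoint (freeVerts T s) (freeVerts T s') := by
  refine Finset.disjoint_left.2 fun x hx hx' => ?_
  rw [mem_freeVerts] at hx hx'
  rcases hT.2.1 s hs s' hs' with h | h | ⟨h, -⟩
  · exact hx'.2 s hs (h.ssubset_of_ne hne) hx.1
  · exact hx.2 s' hs' (h.ssubset_of_ne hne.symm) hx'.1
  · exact Finset.disjoint_iff_inter_eq_empty.2 h |>.notMem_of_mem_left_finset hx.1 hx'.1

theorem IsMaxTubing.freeVerts_subsingleton (hT : IsMaxTubing G T) (hs : s ∈ T) :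
    (freeVerts T s : Set α).Subsingleton := by
  intro x hx y hy
  by_contra hxy
  rw [Finset.mem_coe, mem_freeVerts] at hx hy
  have hyX : y ∈ s.erase x := Finset.mem_erase.2 ⟨Ne.symm hxy, hy.1⟩
  set K := componentIn G (s.erase x) y
  have hKs : K ⊂ s := by
    refine Finset.ssubset_iff_subset_ne.2 ⟨componentIn_subset.trans (Finset.erase_subset x s), ?_⟩
    rintro hK
    exact Finset.notMem_erase x s (componentIn_subset (hK ▸ hx.1))
  refine hy.2 K ?_ hKs (mem_componentIn hyX)
  refine hT.mem_of_forall_compatible (isTube_componentIn hyX) fun a ha => ?_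
  have hsa := hT.1.2.1 s hs a ha
  rcases (compatible_iff (hT.1.1 s hs) (hT.1.1 a ha)).1 hsa with h | h | h
  · exact Or.inl (hKs.subset.trans h)
  · rcases eq_or_ne a s with rfl | has
    · exact Or.inl hKs.subset
    · have hax : a ⊆ s.erase x := fun z hz => Finset.mem_erase.2
        ⟨fun hzx => hx.2 a ha (h.ssubset_of_ne has) (hzx ▸ hz), h hz⟩
      exact (compatible_componentIn (hT.1.1 a ha) hax hyX).symm
  · exact (compatible_iff (isTube_componentIn hyX) (hT.1.1 a ha)).2
      (Or.inr (Or.inr (h.mono hKs.subset subset_rfl)))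

theorem IsTubing.mem_freeVerts_of_nbrOf (hT : IsTubing G T) (ht : t ∈ T)
    (hmin : ∀ a ∈ T, t ⊂ a → ¬ a ⊂ b) (hwb : w ∈ b) (hw : NbrOf G t w) :
    w ∈ freeVerts T b := by
  refine mem_freeVerts.2 ⟨hwb, fun a ha hab hwa => ?_⟩
  obtain ⟨hwt, x, hxt, hwx⟩ := hw
  rcases (compatible_iff (hT.1 a ha) (hT.1 t ht)).1 (hT.2.1 a ha t ht) with h | h | h
  · exact hwt (h hwa)
  · rcases eq_or_ne t a with rfl | hta
    · exact hwt hwa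
    · exact hmin a ha (h.ssubset_of_ne hta) hab
  · exact h.2 w hwa x hxt hwx

end FreeVertices

section MaximalTubings

variable {G : SimpleGraph V} {T T' : Finset (Finset V)} {t t' : Finset V}

theorem IsTubing.card_le (hT : IsTubing G T) : T.card ≤ Fintype.card V :=
  (Finset.card_le_card_biUnion (fun _ hs _ hs' hne => hT.disjoint_freeVerts hs hs' hne)
    fun _ hs => hT.freeVerts_nonempty hs).trans (Finset.card_le_univ _)

theorem IsTubing.isMaxTubing_of_card_eq (hT : IsTubing G T) (hcard : T.card = Fintype.card V) :
    IsMaxTubing G T :=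
  ⟨hT, fun _ hT' hTT' => Finset.eq_of_subset_of_card_le hTT' (hcard ▸ hT'.card_le)⟩

theorem IsTubing.componentIn_univ_mem (hT : IsTubing G T) (x : V) :
    componentIn G Finset.univ x ∈ T :=
  hT.2.2 _ (isTube_componentIn (Finset.mem_univ x)) fun s hs hsub =>
    hsub.antisymm (subset_componentIn hs (Finset.subset_univ s)
      (hsub (mem_componentIn (Finset.mem_univ x))))

theorem IsMaxTubing.existsUnique_nbrOf (hT : IsMaxTubing G T) (ht : t ∈ T) (ht' : IsTube G t')
    (hinc : ¬ Compatible G t t') (hcompat : ∀ a ∈ T, a ≠ t → Compatible G a t') :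
    ∃! w, w ∈ t' \ t ∧ NbrOf G t w := by
  have htube := hT.1.1 t ht
  have hsep : ∀ {s}, t ⊆ s → ¬ Separated G s t' := fun hts h =>
    hinc ((compatible_iff htube ht').2 (Or.inr (Or.inr (h.mono hts subset_rfl))))
  obtain ⟨w, hw, hwt⟩ := exists_nbrOf_of_not_compatible htube ht' hinc
  obtain ⟨b, hb, hmin⟩ : ∃ b, Minimal (· ∈ T.filter (t ⊂ ·)) b := by
    obtain ⟨x, hx⟩ := htube.1
    have htt' := subset_componentIn (htube.union ht' (hsep subset_rfl)) (Finset.subset_univ _)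
      (Finset.mem_union_left t' hx)
    refine Finset.exists_minimal ⟨_, Finset.mem_filter.2 ⟨hT.1.componentIn_univ_mem x,
      Finset.ssubset_iff_of_subset (Finset.subset_union_left.trans htt') |>.2 ⟨w, ?_, ?_⟩⟩⟩
    exacts [htt' (Finset.mem_union_right t (Finset.mem_sdiff.1 hw).1), hwt.1]
  obtain ⟨hbT, htb⟩ := Finset.mem_filter.1 hb
  have ht'b : t' ⊆ b := by
    rcases (compatible_iff (hT.1.1 b hbT) ht').1 (hcompat b hbT htb.ne') with h | h | h
    exacts [absurd (Or.inl (htb.subset.trans h)) hinc, h, absurd h (hsep htb.subset)]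
  have hfree : ∀ w ∈ t' \ t, NbrOf G t w → w ∈ freeVerts T b := fun w hw hwt =>
    hT.1.mem_freeVerts_of_nbrOf ht (fun a ha hta hab => hab.not_subset
      (hmin (Finset.mem_filter.2 ⟨ha, hta⟩) hab.subset)) (ht'b (Finset.mem_sdiff.1 hw).1) hwt
  exact ⟨w, ⟨hw, hwt⟩, fun w' ⟨hw', hw't⟩ =>
    hT.freeVerts_subsingleton hbT (hfree w' hw' hw't) (hfree w hw hwt)⟩

theorem existsUnique_nbrOf_of_erase_eq (hT : IsMaxTubing G T) (hT' : IsMaxTubing G T')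
    (ht : t ∈ T) (ht' : t' ∈ T') (hne : t ≠ t') (he : T.erase t = T'.erase t') :
    ∃! w, w ∈ t' \ t ∧ NbrOf G t w := by
  have hmem : ∀ a ∈ T, a ≠ t → a ∈ T' := fun a ha hat =>
    Finset.mem_of_mem_erase (he ▸ Finset.mem_erase.2 ⟨hat, ha⟩)
  have htT' : t ∉ T' := fun h => Finset.notMem_erase t T (he ▸ Finset.mem_erase.2 ⟨hne, h⟩)
  refine hT.existsUnique_nbrOf ht (hT'.1.1 t' ht') (fun hc => htT' ?_)
    fun a ha hat => hT'.1.2.1 a (hmem a ha hat) t' ht'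
  refine hT'.mem_of_forall_compatible (hT.1.1 t ht) fun a ha => ?_
  rcases eq_or_ne a t' with rfl | hat'
  · exact hc
  · exact hT.1.2.1 t ht a (Finset.mem_of_mem_erase (he ▸ Finset.mem_erase.2 ⟨hat', ha⟩))

end MaximalTubings

section Rankings

variable {β : Type*} [LinearOrder β] {G : SimpleGraph V} {r : V → β} {x y : V}

def sublevel (r : V → β) (x : V) : Finset V :=
  Finset.univ.filter fun y => r y ≤ r x

noncomputable def rankTube (G : SimpleGraph V) (r : V → β) (x : V) : Finset V :=
  componentIn G (sublevel r x) x

noncomputable def rankTubing (G : SimpleGraph V) (r : V → β) : Finset (Finset V) :=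
  Finset.univ.image (rankTube G r)

theorem mem_rankTube_self : x ∈ rankTube G r x :=
  mem_componentIn (by simp [sublevel])

theorem isTube_rankTube : IsTube G (rankTube G r x) :=
  isTube_componentIn (by simp [sublevel])

theorem rankTube_subset_sublevel (h : r x ≤ r y) : rankTube G r x ⊆ sublevel r y :=
  fun z hz => Finset.mem_filter.2
    ⟨Finset.mem_univ z, (Finset.mem_filter.1 (componentIn_subset hz)).2.trans h⟩

theorem rankTube_injective (hr : Function.Injective r) : Function.Injective (rankTube G r) := by
  intro x y hxy
  have hle : ∀ {x y}, x ∈ rankTube G r y → r x ≤ r y := fun h =>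
    (Finset.mem_filter.1 (componentIn_subset h)).2
  exact hr (le_antisymm (hle (hxy ▸ mem_rankTube_self)) (hle (hxy ▸ mem_rankTube_self)))

theorem isTubing_rankTubing (G : SimpleGraph V) (r : V → β) : IsTubing G (rankTubing G r) := by
  have hcompat : ∀ x y, r x ≤ r y → Compatible G (rankTube G r x) (rankTube G r y) :=
    fun x y hxy => compatible_componentIn isTube_rankTube (rankTube_subset_sublevel hxy)
      (by simp [sublevel])
  refine ⟨?_, ?_, fun K hK hmax => ?_⟩
  · simp only [rankTubing, Finset.mem_image, Finset.mem_univ, true_and, forall_exists_index]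
    rintro _ x rfl
    exact isTube_rankTube
  · simp only [rankTubing, Finset.mem_image, Finset.mem_univ, true_and, forall_exists_index]
    rintro _ x rfl _ y rfl
    rcases le_total (r x) (r y) with h | h
    exacts [hcompat x y h, (hcompat y x h).symm]
  · obtain ⟨x, hxK, hx⟩ := K.exists_max_image r hK.1
    have hK : K ⊆ rankTube G r x :=
      subset_componentIn hK (fun y hy => Finset.mem_filter.2 ⟨Finset.mem_univ y, hx y hy⟩) hxK
    exact Finset.mem_image.2 ⟨x, Finset.mem_univ x, (hmax _ isTube_rankTube hK).symm⟩

theorem isMaxTubing_rankTubing (hr : Function.Injective r) : IsMaxTubing G (rankTubing G r) :=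
  (isTubing_rankTubing G r).isMaxTubing_of_card_eq
    (by rw [rankTubing, Finset.card_image_of_injective _ (rankTube_injective hr), Finset.card_univ])

end Rankings

theorem Finset.image_erase_subset_image_erase {α β : Type*} [DecidableEq α] [DecidableEq β]
    {s : Finset α} {f g : α → β} {a b : α} (ha : a ∈ s) (hab : a ≠ b) (hfg : f b = g a)
    (heq : ∀ x, x ≠ a → x ≠ b → f x = g x) : (s.erase a).image f ⊆ (s.erase b).image g := by
  simp only [Finset.subset_iff, Finset.mem_image, Finset.mem_erase, forall_exists_index, and_imp]
  rintro _ x hxa hx rfl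
  by_cases hxb : x = b
  · exact ⟨a, ⟨hab, ha⟩, hxb ▸ hfg.symm⟩
  · exact ⟨x, ⟨hxb, hx⟩, (heq x hxa hxb).symm⟩

section Exchange

variable {G : SimpleGraph V} {U t t' : Finset V} {a b v v' x : V}

/-- Ranks `U \ {a, b}` first, then `a`, then `b`, then the vertices outside `U`; inside each
block, ties are broken by a fixed enumeration of `V`. -/
noncomputable def exchangeRank (U : Finset V) (a b : V) (x : V) : ℕ :=
  (if x = a then 1 else if x = b then 2 else if x ∈ U then 0 else 3) * Fintype.card V
    + Fintype.equivFin V x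

theorem exchangeRank_injective (U : Finset V) (a b : V) :
    Function.Injective (exchangeRank U a b) := by
  intro x y h
  have hmod := congrArg (· % Fintype.card V) h
  simp only [exchangeRank, Nat.mul_add_mod_of_lt (Fintype.equivFin V _).isLt] at hmod
  exact (Fintype.equivFin V).injective (Fin.ext hmod)

theorem sublevel_exchangeRank_left (ha : a ∈ U) (hab : a ≠ b) :
    sublevel (exchangeRank U a b) a = U.erase b := by
  have := fun z => (Fintype.equivFin V z).isLt
  ext y
  simp only [sublevel, exchangeRank, Finset.mem_filter, Finset.mem_univ, true_and,
    Finset.mem_erase]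
  split_ifs <;> grind

theorem sublevel_exchangeRank_right (ha : a ∈ U) (hb : b ∈ U) :
    sublevel (exchangeRank U a b) b = U := by
  have := fun z => (Fintype.equivFin V z).isLt
  ext y
  simp only [sublevel, exchangeRank, Finset.mem_filter, Finset.mem_univ, true_and]
  split_ifs <;> grind

theorem sublevel_exchangeRank_swap (hxa : x ≠ a) (hxb : x ≠ b) :
    sublevel (exchangeRank U a b) x = sublevel (exchangeRank U b a) x := by
  have := fun z => (Fintype.equivFin V z).isLt
  ext y
  simp only [sublevel, exchangeRank]
  split_ifs <;> grind

theorem rankTube_exchangeRank_left (ht : IsTube G t) (hv : v ∈ t) (hv't : v' ∉ t)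
    (huniq : ∀ w ∈ t' \ t, NbrOf G t w → w = v') :
    rankTube G (exchangeRank (t ∪ t') v v') v = t := by
  rw [rankTube, sublevel_exchangeRank_left (Finset.mem_union_left t' hv)
    (ne_of_mem_of_not_mem hv hv't)]
  refine componentIn_eq ht (fun z hz => Finset.mem_erase.2 ⟨fun h => hv't (h ▸ hz),
    Finset.mem_union_left t' hz⟩) hv fun w hw hwt => ?_
  obtain ⟨hwv', hw⟩ := Finset.mem_erase.1 hw
  exact hwv' (huniq w (Finset.mem_sdiff.2 ⟨(Finset.mem_union.1 hw).resolve_left hwt.1, hwt.1⟩) hwt)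

theorem rankTube_exchangeRank_right (hU : IsTube G U) (ha : a ∈ U) (hb : b ∈ U) :
    rankTube G (exchangeRank U a b) b = U := by
  rw [rankTube, sublevel_exchangeRank_right ha hb, componentIn_of_isTube hU hb]

end Exchange

theorem exchangeable_of_existsUnique_nbrOf {G : SimpleGraph V} {t t' : Finset V}
    (ht : IsTube G t) (ht' : IsTube G t') (h : ∃! v, v ∈ t \ t' ∧ NbrOf G t' v)
    (h' : ∃! v', v' ∈ t' \ t ∧ NbrOf G t v') : ExchangeableT G t t' := by
  obtain ⟨v, ⟨hv, -, x, hx, hvx⟩, hvu⟩ := h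
  obtain ⟨v', ⟨hv', -⟩, hv'u⟩ := h'
  obtain ⟨hvt, hvt'⟩ := Finset.mem_sdiff.1 hv
  obtain ⟨hv't', hv't⟩ := Finset.mem_sdiff.1 hv'
  have hvU := Finset.mem_union_left t' hvt
  have hv'U := Finset.mem_union_right t hv't'
  have hU : IsTube G (t ∪ t') := ht.union ht' fun hsep => hsep.2 v hvt x hx hvx
  set r := exchangeRank (t ∪ t') v v'
  set r' := exchangeRank (t ∪ t') v' v
  have hr : Function.Injective r := exchangeRank_injective _ _ _
  have hr' : Function.Injective r' := exchangeRank_injective _ _ _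
  have hrv : rankTube G r v = t :=
    rankTube_exchangeRank_left ht hvt hv't fun w hw hwt => hv'u w ⟨hw, hwt⟩
  have hr'v' : rankTube G r' v' = t' := by
    have := rankTube_exchangeRank_left ht' hv't' hvt' fun w hw hwt => hvu w ⟨hw, hwt⟩
    rwa [Finset.union_comm] at this
  have hswap : rankTube G r v' = rankTube G r' v := by
    rw [rankTube_exchangeRank_right hU hvU hv'U, rankTube_exchangeRank_right hU hv'U hvU]
  have hrr' : ∀ x, x ≠ v → x ≠ v' → rankTube G r x = rankTube G r' x := fun x hxv hxv' => by
    rw [rankTube, rankTube, sublevel_exchangeRank_swap hxv hxv']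
  refine ⟨fun h => hvt' (h ▸ hvt), rankTubing G r, rankTubing G r', isMaxTubing_rankTubing hr,
    isMaxTubing_rankTubing hr', hrv ▸ Finset.mem_image_of_mem _ (Finset.mem_univ v),
    hr'v' ▸ Finset.mem_image_of_mem _ (Finset.mem_univ v'), ?_⟩
  rw [rankTubing, rankTubing, ← hrv, ← hr'v', ← Finset.image_erase (rankTube_injective hr),
    ← Finset.image_erase (rankTube_injective hr')]
  have hvv' : v ≠ v' := ne_of_mem_of_not_mem hvt hv't
  exact (Finset.image_erase_subset_image_erase (Finset.mem_univ v) hvv' hswap hrr').antisymm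
    (Finset.image_erase_subset_image_erase (Finset.mem_univ v') hvv'.symm hswap.symm
      fun x hxv' hxv => (hrr' x hxv hxv').symm)

theorem stmt11 (G : SimpleGraph V) (t t' : Finset V)
    (ht : IsTube G t) (ht' : IsTube G t') :
    ExchangeableT G t t' ↔
      ((∃! v, v ∈ t \ t' ∧ NbrOf G t' v) ∧ (∃! v', v' ∈ t' \ t ∧ NbrOf G t v')) := by
  constructor
  · rintro ⟨hne, T, T', hT, hT', htT, ht'T', he⟩
    exact ⟨existsUnique_nbrOf_of_erase_eq hT' hT ht'T' htT hne.symm he.symm,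
      existsUnique_nbrOf_of_erase_eq hT hT' htT ht'T' hne he⟩
  · rintro ⟨h, h'⟩
    exact exchangeable_of_existsUnique_nbrOf ht ht' h h'
end

section
/- Let G be a graph on vertex set V with set of tubes T(G). Define the height function h : T(G) → ℝ by h(t) = −3^{|t|}. Then for any pair of exchangeable tubes t, t' of G, the wall-crossing inequality holds strictly: −3^{|t|} − 3^{|t'|} + 3^{|t ∪ t'|} + Σ_{s ∈ cc(t ∩ t')} 3^{|s|} > 0. -/
open scoped Classical

variable {V : Type*} [Fintype V] [DecidableEq V]

lemma compat_symm {G : SimpleGraph V} {a b : Finset V} (h : Compatible G a b) :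
    Compatible G b a := by
  rcases h with h | h | ⟨h1, h2⟩
  · exact Or.inr (Or.inl h)
  · exact Or.inl h
  · exact Or.inr (Or.inr ⟨by rwa [Finset.inter_comm], by rwa [Finset.union_comm]⟩)

lemma insert_tubing {G : SimpleGraph V} {T : Finset (Finset V)} {x : Finset V}
    (hT : IsTubing G T) (hx : IsTube G x) (hc : ∀ s ∈ T, Compatible G x s) :
    IsTubing G (insert x T) := by
  refine ⟨?_, ?_, ?_⟩
  · intro s hs
    rcases Finset.mem_insert.1 hs with rfl | hs
    · exact hx
    · exact hT.1 s hs
  · intro a ha b hb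
    rcases Finset.mem_insert.1 ha with ha | ha
    · subst ha
      rcases Finset.mem_insert.1 hb with hb | hb
      · subst hb; exact Or.inl le_rfl
      · exact hc b hb
    · rcases Finset.mem_insert.1 hb with hb | hb
      · rw [hb]; exact compat_symm (hc a ha)
      · exact hT.2.1 a ha b hb
  · intro K hK hKmax
    exact Finset.mem_insert_of_mem (hT.2.2 K hK hKmax)

lemma exch_not_subset {G : SimpleGraph V} {t t' : Finset V}
    (ht' : IsTube G t') (hex : ExchangeableT G t t') : ¬ t ⊆ t' := by
  obtain ⟨hne, T, T', hT, hT', htT, ht'T', herase⟩ := hex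
  intro hsub
  have ht'notT : t' ∉ T := by
    intro h
    have : t' ∈ T.erase t := Finset.mem_erase.2 ⟨Ne.symm hne, h⟩
    rw [herase] at this
    exact (Finset.mem_erase.1 this).1 rfl
  have hc : ∀ s ∈ T, Compatible G t' s := by
    intro s hs
    by_cases hst : s = t
    · exact Or.inr (Or.inl (hst ▸ hsub))
    · have : s ∈ T'.erase t' := herase ▸ Finset.mem_erase.2 ⟨hst, hs⟩
      exact hT'.1.2.1 t' ht'T' s (Finset.mem_of_mem_erase this)
  have htub : IsTubing G (insert t' T) := insert_tubing hT.1 ht' hc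
  have := hT.2 (insert t' T) htub (Finset.subset_insert _ _)
  exact ht'notT (this ▸ Finset.mem_insert_self t' T)

lemma exch_symm {G : SimpleGraph V} {t t' : Finset V} (hex : ExchangeableT G t t') :
    ExchangeableT G t' t := by
  obtain ⟨hne, T, T', hT, hT', htT, ht'T', herase⟩ := hex
  exact ⟨Ne.symm hne, T', T, hT', hT, ht'T', htT, herase.symm⟩

theorem stmt13 (G : SimpleGraph V) (t t' : Finset V)
    (ht : IsTube G t) (ht' : IsTube G t') (hex : ExchangeableT G t t') :
    0 < -(3 : ℝ) ^ t.card - (3 : ℝ) ^ t'.card + (3 : ℝ) ^ (t ∪ t').card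
      + ∑ s ∈ gccSet G (t ∩ t'), (3 : ℝ) ^ s.card := by
  have h1 : ¬ t ⊆ t' := exch_not_subset ht' hex
  have h2 : ¬ t' ⊆ t := exch_not_subset ht (exch_symm hex)
  have hss : t ⊂ t ∪ t' :=
    ⟨Finset.subset_union_left, fun h => h2 (Finset.subset_union_right.trans h)⟩
  have hss' : t' ⊂ t ∪ t' :=
    ⟨Finset.subset_union_right, fun h => h1 (Finset.subset_union_left.trans h)⟩
  have hlt : t.card < (t ∪ t').card := Finset.card_lt_card hss
  have hlt' : t'.card < (t ∪ t').card := Finset.card_lt_card hss'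
  obtain ⟨k, hk⟩ : ∃ k, (t ∪ t').card = k + 1 :=
    ⟨(t ∪ t').card - 1, by omega⟩
  have ha : (3 : ℝ) ^ t.card ≤ 3 ^ k := by
    apply pow_le_pow_right₀ (by norm_num)
    omega
  have hb : (3 : ℝ) ^ t'.card ≤ 3 ^ k := by
    apply pow_le_pow_right₀ (by norm_num)
    omega
  have hu : (3 : ℝ) ^ (t ∪ t').card = 3 * 3 ^ k := by
    rw [hk, pow_succ]; ring
  have hsum : 0 ≤ ∑ s ∈ gccSet G (t ∩ t'), (3 : ℝ) ^ s.card :=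
    Finset.sum_nonneg fun s _ => pow_nonneg (by norm_num) _
  have hpos : (0 : ℝ) < 3 ^ k := pow_pos (by norm_num) _
  linarith
end

section
/- Let G be a graph on vertex set V. Every tube t of G with |t| ≥ 2 has at least two non-disconnecting vertices, with exactly two if and only if the induced subgraph on t is a path. Consequently, the number of maximal exchangeable pairs Σ_{t ∈ T(G)} C(nd(t), 2) (where nd(t) is the number of non-disconnecting vertices of t) equals |T(G)| − |V| if and only if G is a disjoint union of paths, and is strictly greater otherwise. -/
open scoped Classical

variable {V : Type*} [Fintype V] [DecidableEq V]

/-- The induced subgraph on `t` is a path: there is a duplicate-free enumeration of `t`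
such that two vertices of `t` are adjacent iff they are consecutive in the enumeration. -/
def InducedIsPath (G : SimpleGraph V) (t : Finset V) : Prop :=
  ∃ l : List V, l.Nodup ∧ l.toFinset = t ∧
    ∀ u ∈ t, ∀ w ∈ t, (G.Adj u w ↔
      ((∃ k, l[k]? = some u ∧ l[k+1]? = some w) ∨
       (∃ k, l[k]? = some w ∧ l[k+1]? = some u)))

/-- The number of non-disconnecting vertices of `t`. -/
noncomputable def ndCount (G : SimpleGraph V) (t : Finset V) : ℕ :=
  (t.filter (fun w => NonDisc G t w)).card

/-- `G` is a disjoint union of paths: every connected component (maximal tube) is a path. -/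
def DisjointUnionOfPaths (G : SimpleGraph V) : Prop :=
  ∀ K : Finset V, IsTube G K → (∀ C : Finset V, IsTube G C → K ⊆ C → K = C) →
    InducedIsPath G K


/-!
Removing a non-disconnecting vertex `a` of a tube `t` (one exists: grow a largest proper
subtube by a neighbour) leaves a tube `s`, and by induction `s` is an induced path or has at
least three non-disconnecting vertices. In the second case, if `a` is attached to `x₀ ∈ s`,
every non-disconnecting vertex of `s` other than `x₀` remains one in `t`, and so does `a`. In
the first case, either all neighbours of `a` in `s` are one end of the path, and `t` is a longer
path, or `a` reaches each end through another vertex, and `a` and both ends are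
non-disconnecting in `t`. An inner vertex of a path separates its ends, so a path has exactly
two non-disconnecting vertices.

For the count, singletons contribute `C(1, 2) = 0`, every other tube at least `1`, with equality
exactly for paths; and every tube lies in a component, of which it is a subpath when the
component is a path.
-/

section Tubes

variable {V : Type*} {G : SimpleGraph V} {s t : Finset V}

lemma isTube_singleton_s19 (G : SimpleGraph V) (v : V) : IsTube G {v} :=
  ⟨Finset.singleton_nonempty v, by
    rw [Finset.coe_singleton, SimpleGraph.induce_singleton_eq_top]
    exact SimpleGraph.connected_top⟩

lemma IsTube.exists_eq_singleton_of_card_lt_two (ht : IsTube G t) (h : t.card < 2) :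
    ∃ v, t = {v} :=
  Finset.card_eq_one.mp (by have := ht.1.card_pos; omega)

lemma IsTube.exists_adj_boundary (ht : IsTube G t) (S : Set V) {a b : V} (ha : a ∈ t)
    (haS : a ∈ S) (hb : b ∈ t) (hbS : b ∉ S) :
    ∃ x ∈ t, x ∈ S ∧ ∃ y ∈ t, y ∉ S ∧ G.Adj x y := by
  obtain ⟨p⟩ := ht.2.preconnected ⟨a, ha⟩ ⟨b, hb⟩
  obtain ⟨d, -, hd₁, hd₂⟩ := p.exists_boundary_dart {x | x.1 ∈ S} haS hbS
  exact ⟨d.fst.1, d.fst.2, hd₁, d.snd.1, d.snd.2, hd₂, d.adj⟩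

variable [DecidableEq V]

lemma IsTube.insert_of_adj (hs : IsTube G s) {a x : V} (hx : x ∈ s) (hadj : G.Adj a x) :
    IsTube G (insert a s) :=
  ⟨Finset.insert_nonempty a s, by
    rw [Finset.coe_insert, Set.insert_eq]
    refine SimpleGraph.connected_induce_union ?_ hs.2.preconnected (Set.mem_singleton a) hx hadj
    rw [SimpleGraph.induce_singleton_eq_top]
    exact SimpleGraph.connected_top.preconnected⟩

lemma IsTube.exists_isTube_erase (ht : IsTube G t) (h2 : 2 ≤ t.card) :
    ∃ a ∈ t, IsTube G (t.erase a) := by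
  obtain ⟨v, hv⟩ := ht.1
  let P := t.powerset.filter fun s => s ≠ t ∧ IsTube G s
  have hvP : {v} ∈ P := by
    simp only [P, Finset.mem_filter, Finset.mem_powerset, Finset.singleton_subset_iff]
    refine ⟨hv, fun h => ?_, isTube_singleton_s19 G v⟩
    rw [← h, Finset.card_singleton] at h2
    omega
  obtain ⟨s, -, hsmax⟩ := P.exists_le_maximal hvP
  obtain ⟨hst, hsne, hs⟩ : s ⊆ t ∧ s ≠ t ∧ IsTube G s := by
    simpa [P] using hsmax.1
  obtain ⟨b, hbt, hbs⟩ := Finset.not_subset.mp fun h => hsne (hst.antisymm h)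
  obtain ⟨x, -, hxs, y, hyt, hys, hxy⟩ :=
    ht.exists_adj_boundary s (hst hs.1.choose_spec) hs.1.choose_spec hbt hbs
  -- a proper subtube of maximal size can only grow to `t` itself
  have hyst : insert y s = t := by
    by_contra hne
    have hmem : insert y s ∈ P := by
      simp only [P, Finset.mem_filter, Finset.mem_powerset]
      exact ⟨Finset.insert_subset hyt hst, hne, hs.insert_of_adj hxs hxy.symm⟩
    exact hys (hsmax.2 hmem (Finset.subset_insert y s) (Finset.mem_insert_self y s))
  exact ⟨y, hyt, by rwa [← hyst, Finset.erase_insert hys]⟩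

lemma IsTube.nonDisc_insert_self (hs : IsTube G s) {a : V} (ha : a ∉ s) :
    NonDisc G (insert a s) a :=
  ⟨Finset.mem_insert_self a s, Or.inr (by rwa [Finset.erase_insert ha])⟩

lemma IsTube.nonDisc_insert {a x z : V} (hz : IsTube G (s.erase z)) (hzs : z ∈ s) (hza : z ≠ a)
    (hx : x ∈ s.erase z) (hadj : G.Adj a x) : NonDisc G (insert a s) z :=
  ⟨Finset.mem_insert_of_mem hzs,
    Or.inr (by rw [Finset.erase_insert_of_ne hza.symm]; exact hz.insert_of_adj hx hadj)⟩

lemma ndCount_le_card (G : SimpleGraph V) (t : Finset V) : ndCount G t ≤ t.card :=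
  Finset.card_filter_le _ _

end Tubes

section InducedPaths

def IsInducedPathList {V : Type*} (G : SimpleGraph V) (l : List V) : Prop :=
  l.Nodup ∧ ∀ (i j : ℕ) (hi : i < l.length) (hj : j < l.length),
    G.Adj l[i] l[j] ↔ j = i + 1 ∨ i = j + 1

lemma List.Nodup.exists_getElem?_consecutive_iff {α : Type*} {l : List α} (hl : l.Nodup)
    {i j : ℕ} (hi : i < l.length) (hj : j < l.length) :
    (∃ k, l[k]? = some l[i] ∧ l[k + 1]? = some l[j]) ↔ j = i + 1 := by
  constructor
  · rintro ⟨k, hk, hk'⟩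
    obtain ⟨_, hk⟩ := List.getElem?_eq_some_iff.mp hk
    obtain ⟨_, hk'⟩ := List.getElem?_eq_some_iff.mp hk'
    rw [hl.getElem_inj_iff] at hk hk'
    omega
  · rintro rfl
    exact ⟨i, List.getElem?_eq_getElem hi, List.getElem?_eq_getElem hj⟩

variable {V : Type*} {G : SimpleGraph V} {l : List V}

namespace IsInducedPathList

lemma reverse (h : IsInducedPathList G l) : IsInducedPathList G l.reverse := by
  refine ⟨List.nodup_reverse.mpr h.1, fun i j hi hj => ?_⟩
  rw [List.length_reverse] at hi hj
  rw [List.getElem_reverse, List.getElem_reverse, h.2]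
  omega

lemma tail (h : IsInducedPathList G l) : IsInducedPathList G l.tail := by
  refine ⟨h.1.sublist (List.tail_sublist l), fun i j hi hj => ?_⟩
  rw [List.length_tail] at hi hj
  rw [List.getElem_tail, List.getElem_tail, h.2]
  omega

lemma cons (h : IsInducedPathList G l) (hl : 0 < l.length) {a : V} (ha : a ∉ l)
    (hadj : ∀ x ∈ l, G.Adj a x ↔ x = l[0]) : IsInducedPathList G (a :: l) := by
  have hhead : ∀ j (hj : j < l.length), G.Adj a l[j] ↔ j = 0 := fun j hj => by
    rw [hadj _ (List.getElem_mem hj), h.1.getElem_inj_iff]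
  refine ⟨List.nodup_cons.mpr ⟨ha, h.1⟩, fun i j hi hj => ?_⟩
  cases i with
  | zero =>
    cases j with
    | zero => simp
    | succ j => simp [hhead]
  | succ i =>
    cases j with
    | zero => simp [G.adj_comm _ a, hhead]
    | succ j => simp [h.2]

lemma getElem_mem_of_isTube (h : IsInducedPathList G l) {s : Finset V} (hs : IsTube G s)
    (hsl : ∀ x ∈ s, x ∈ l) {i j m : ℕ} (hi : i < l.length) (hj : j < l.length)
    (hm : m < l.length) (his : l[i] ∈ s) (hjs : l[j] ∈ s) (him : i ≤ m) (hmj : m ≤ j) :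
    l[m] ∈ s := by
  by_contra hms
  have him' : i < m := lt_of_le_of_ne him fun hieq => hms (by simpa [hieq] using his)
  obtain ⟨x, -, ⟨p, hpm, hp, rfl⟩, y, hys, hyS, hxy⟩ :=
    hs.exists_adj_boundary {x | ∃ p < m, ∃ hp : p < l.length, l[p] = x} his ⟨i, him', hi, rfl⟩
      hjs fun ⟨p, hpm, hp, hpj⟩ => by rw [h.1.getElem_inj_iff] at hpj; omega
  obtain ⟨q, hq, rfl⟩ := List.getElem_of_mem (hsl _ hys)
  rw [h.2] at hxy
  rcases lt_trichotomy q m with hqm | rfl | hmq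
  · exact hyS ⟨q, hqm, hq, rfl⟩
  · exact hms hys
  · omega

end IsInducedPathList

variable [DecidableEq V]

namespace IsInducedPathList

lemma isTube (h : IsInducedPathList G l) (hl : l ≠ []) : IsTube G l.toFinset := by
  induction l with
  | nil => contradiction
  | cons a r ih =>
    cases r with
    | nil => simpa using isTube_singleton_s19 G a
    | cons b r =>
      rw [List.toFinset_cons]
      exact (ih h.tail (List.cons_ne_nil b r)).insert_of_adj (x := b) (by simp)
        ((h.2 0 1 (by simp) (by simp)).mpr (by simp))

lemma isTube_erase_head (h : IsInducedPathList G l) (hl : 2 ≤ l.length) :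
    IsTube G (l.toFinset.erase l[0]) := by
  obtain ⟨a, r, rfl⟩ :=
    List.exists_cons_of_ne_nil (List.ne_nil_of_length_pos (l := l) (by omega))
  have har : a ∉ r := (List.nodup_cons.mp h.1).1
  simpa [List.toFinset_cons, Finset.erase_insert (List.mem_toFinset.not.mpr har)] using
    h.tail.isTube (List.ne_nil_of_length_pos (l := r) (by rw [List.length_cons] at hl; omega))

lemma isTube_erase_last (h : IsInducedPathList G l) (hl : 2 ≤ l.length) :
    IsTube G (l.toFinset.erase l[l.length - 1]) := by
  simpa [List.getElem_reverse] using h.reverse.isTube_erase_head (by simpa using hl)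

lemma ndCount_eq_two (h : IsInducedPathList G l) (hl : 2 ≤ l.length) :
    ndCount G l.toFinset = 2 := by
  have hlast : l.length - 1 < l.length := by omega
  have hnd : l.toFinset.filter (fun w => NonDisc G l.toFinset w) = {l[0], l[l.length - 1]} := by
    ext w
    simp only [Finset.mem_filter, Finset.mem_insert, Finset.mem_singleton]
    constructor
    · rintro ⟨hw, -, hwt⟩
      obtain ⟨m, hm, rfl⟩ := List.getElem_of_mem (List.mem_toFinset.mp hw)
      rw [h.1.getElem_inj_iff, h.1.getElem_inj_iff]
      by_contra! hint
      -- an inner vertex separates the two ends of the path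
      have hends : l[0] ∈ l.toFinset.erase l[m] ∧ l[l.length - 1] ∈ l.toFinset.erase l[m] := by
        simp [h.1.getElem_inj_iff, hint.1.symm, hint.2.symm]
      have hsub : ∀ x ∈ l.toFinset.erase l[m], x ∈ l := fun x hx =>
        List.mem_toFinset.mp (Finset.mem_of_mem_erase hx)
      rcases hwt with hempty | htube
      · simp [hempty] at hends
      · simpa using h.getElem_mem_of_isTube htube hsub (by omega) hlast hm hends.1 hends.2
          (Nat.zero_le m) (by omega)
    · rintro (rfl | rfl)
      · exact ⟨by simp, by simp, Or.inr (h.isTube_erase_head hl)⟩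
      · exact ⟨by simp, by simp, Or.inr (h.isTube_erase_last hl)⟩
  rw [ndCount, hnd, Finset.card_pair (by rw [Ne, h.1.getElem_inj_iff]; omega)]

lemma exists_of_isTube_subset (h : IsInducedPathList G l) {s : Finset V} (hs : IsTube G s)
    (hsl : s ⊆ l.toFinset) : ∃ l' : List V, l'.toFinset = s ∧ IsInducedPathList G l' := by
  induction hn : l.length generalizing l with
  | zero => simp_all [Finset.subset_empty, hs.1.ne_empty]
  | succ n ih =>
    by_cases hsl' : s = l.toFinset
    · exact ⟨l, hsl'.symm, h⟩
    have hdrop : ∀ l', IsInducedPathList G l' → l'.length = n + 1 → s ⊆ l'.toFinset →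
        ∀ h0 : 0 < l'.length, l'[0] ∉ s → ∃ l'', l''.toFinset = s ∧ IsInducedPathList G l'' := by
      intro l' h' hn' hsl' h0 hs0
      obtain ⟨a, r, rfl⟩ := List.exists_cons_of_ne_nil (List.ne_nil_of_length_pos h0)
      refine ih h'.tail (fun x hx => ?_) (by simpa using hn')
      rcases List.mem_cons.mp (List.mem_toFinset.mp (hsl' hx)) with rfl | hxr
      · exact absurd hx hs0
      · exact List.mem_toFinset.mpr hxr
    have hl : 0 < l.length := by omega
    by_cases h0 : l[0] ∈ s
    · refine hdrop l.reverse h.reverse (by simpa using hn) (by simpa using hsl)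
        (by simpa using hl) fun hlast => hsl' (hsl.antisymm fun x hx => ?_)
      -- both ends lie in `s`, hence so does everything in between
      obtain ⟨m, hm, rfl⟩ := List.getElem_of_mem (List.mem_toFinset.mp hx)
      exact h.getElem_mem_of_isTube hs (fun x hx => List.mem_toFinset.mp (hsl hx)) hl
        (by omega : l.length - 1 < l.length) hm h0 (by simpa [List.getElem_reverse] using hlast)
        (Nat.zero_le m) (by omega)
    · exact hdrop l h hn hsl hl h0

end IsInducedPathList

lemma inducedIsPath_iff {t : Finset V} :
    InducedIsPath G t ↔ ∃ l : List V, l.toFinset = t ∧ IsInducedPathList G l := by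
  constructor
  · rintro ⟨l, hnd, rfl, hadj⟩
    refine ⟨l, rfl, hnd, fun i j hi hj => ?_⟩
    rw [hadj _ (by simp) _ (by simp), hnd.exists_getElem?_consecutive_iff,
      hnd.exists_getElem?_consecutive_iff]
  · rintro ⟨l, rfl, hnd, hadj⟩
    refine ⟨l, hnd, rfl, fun u hu w hw => ?_⟩
    obtain ⟨i, hi, rfl⟩ := List.getElem_of_mem (List.mem_toFinset.mp hu)
    obtain ⟨j, hj, rfl⟩ := List.getElem_of_mem (List.mem_toFinset.mp hw)
    rw [hadj, hnd.exists_getElem?_consecutive_iff, hnd.exists_getElem?_consecutive_iff]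

lemma IsTube.inducedIsPath_of_card_lt_two {t : Finset V} (ht : IsTube G t) (h : t.card < 2) :
    InducedIsPath G t := by
  obtain ⟨v, rfl⟩ := ht.exists_eq_singleton_of_card_lt_two h
  refine inducedIsPath_iff.mpr ⟨[v], by simp, List.nodup_singleton v, fun i j hi hj => ?_⟩
  obtain rfl : i = 0 := by simpa using hi
  obtain rfl : j = 0 := by simpa using hj
  simp

lemma InducedIsPath.ndCount_eq_two {t : Finset V} (hp : InducedIsPath G t) (h2 : 2 ≤ t.card) :
    ndCount G t = 2 := by
  obtain ⟨l, rfl, hl⟩ := inducedIsPath_iff.mp hp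
  exact hl.ndCount_eq_two (by rwa [List.toFinset_card_of_nodup hl.1] at h2)

lemma InducedIsPath.of_isTube_subset {s t : Finset V} (hp : InducedIsPath G t)
    (hs : IsTube G s) (hst : s ⊆ t) : InducedIsPath G s := by
  obtain ⟨l, rfl, hl⟩ := inducedIsPath_iff.mp hp
  exact inducedIsPath_iff.mpr (hl.exists_of_isTube_subset hs hst)

end InducedPaths

section PathOrThreeEnds

variable {V : Type*} [DecidableEq V] {G : SimpleGraph V} {s t : Finset V}

lemma IsTube.three_le_ndCount_insert (hs : IsTube G s) {a x₀ : V} (ha : a ∉ s) (hx₀ : x₀ ∈ s)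
    (hadj : G.Adj a x₀) (h3 : 3 ≤ ndCount G s) : 3 ≤ ndCount G (insert a s) := by
  set nd := s.filter fun w => NonDisc G s w
  have hsub : insert a (nd.erase x₀) ⊆ (insert a s).filter fun w => NonDisc G (insert a s) w := by
    intro z hz
    rw [Finset.mem_filter]
    rcases Finset.mem_insert.mp hz with rfl | hz
    · exact ⟨Finset.mem_insert_self z s, hs.nonDisc_insert_self ha⟩
    obtain ⟨hzx₀, hzs, hznd⟩ := Finset.mem_erase.mp hz |>.imp_right Finset.mem_filter.mp
    have hx₀z : x₀ ∈ s.erase z := Finset.mem_erase.mpr ⟨Ne.symm hzx₀, hx₀⟩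
    have hz' : IsTube G (s.erase z) := hznd.2.resolve_left (Finset.ne_empty_of_mem hx₀z)
    exact ⟨Finset.mem_insert_of_mem hzs,
      hz'.nonDisc_insert hzs (fun h => ha (h ▸ hzs)) hx₀z hadj⟩
  have hane : a ∉ nd.erase x₀ := fun h => ha (Finset.mem_filter.mp (Finset.mem_of_mem_erase h)).1
  calc 3 ≤ (nd.erase x₀).card + 1 := by
        have := Finset.pred_card_le_card_erase (s := nd) (a := x₀)
        change 3 ≤ nd.card at h3
        omega
    _ = (insert a (nd.erase x₀)).card := (Finset.card_insert_of_notMem hane).symm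
    _ ≤ ndCount G (insert a s) := Finset.card_le_card hsub

lemma IsInducedPathList.inducedIsPath_insert_or_three_le_ndCount {l : List V}
    (h : IsInducedPathList G l) {a x₀ : V} (ha : a ∉ l) (hx₀ : x₀ ∈ l) (hadj : G.Adj a x₀) :
    InducedIsPath G (insert a l.toFinset) ∨ 3 ≤ ndCount G (insert a l.toFinset) := by
  have hl : 0 < l.length := List.length_pos_of_mem hx₀
  by_cases h₀ : ∀ x ∈ l, G.Adj a x → x = l[0]
  · refine Or.inl (inducedIsPath_iff.mpr ⟨a :: l, by simp, h.cons hl ha fun x hx => ?_⟩)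
    exact ⟨h₀ x hx, fun hx' => hx' ▸ h₀ x₀ hx₀ hadj ▸ hadj⟩
  by_cases h₁ : ∀ x ∈ l, G.Adj a x → x = l[l.length - 1]
  · have hrev : l.reverse[0]'(by simpa using hl) = l[l.length - 1] := by
      simp [List.getElem_reverse]
    refine Or.inl (inducedIsPath_iff.mpr ⟨a :: l.reverse, by simp,
      h.reverse.cons (by simpa using hl) (by simpa using ha) fun x hx => ?_⟩)
    rw [hrev]
    exact ⟨h₁ x (List.mem_reverse.mp hx), fun hx' => hx' ▸ h₁ x₀ hx₀ hadj ▸ hadj⟩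
  push Not at h₀ h₁
  obtain ⟨y₀, hy₀, hay₀, hy₀ne⟩ := h₀
  obtain ⟨y₁, hy₁, hay₁, hy₁ne⟩ := h₁
  have hl2 : 2 ≤ l.length := by
    obtain ⟨k, hk, rfl⟩ := List.getElem_of_mem hy₀
    have : k ≠ 0 := fun hk0 => hy₀ne (by simp [hk0])
    omega
  have hne : ∀ k (hk : k < l.length), a ≠ l[k] := fun k hk h => ha (h ▸ List.getElem_mem hk)
  have hsub : {a, l[0], l[l.length - 1]} ⊆
      (insert a l.toFinset).filter fun w => NonDisc G (insert a l.toFinset) w := by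
    intro z hz
    have hnd : NonDisc G (insert a l.toFinset) z := by
      simp only [Finset.mem_insert, Finset.mem_singleton] at hz
      rcases hz with rfl | rfl | rfl
      · exact (h.isTube (List.ne_nil_of_mem hx₀)).nonDisc_insert_self (by simpa using ha)
      · exact (h.isTube_erase_head hl2).nonDisc_insert (by simp) (hne 0 hl).symm
          (by simp [hy₀, hy₀ne]) hay₀
      · exact (h.isTube_erase_last hl2).nonDisc_insert (by simp) (hne _ (by omega)).symm
          (by simp [hy₁, hy₁ne]) hay₁
    exact Finset.mem_filter.mpr ⟨hnd.1, hnd⟩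
  have hcard : ({a, l[0], l[l.length - 1]} : Finset V).card = 3 := by
    refine Finset.card_eq_three.mpr ⟨_, _, _, hne 0 hl, hne _ (by omega), ?_, rfl⟩
    rw [Ne, h.1.getElem_inj_iff]
    omega
  exact Or.inr (hcard ▸ Finset.card_le_card hsub)

theorem IsTube.inducedIsPath_or_three_le_ndCount (ht : IsTube G t) :
    InducedIsPath G t ∨ 3 ≤ ndCount G t := by
  induction hn : t.card using Nat.strong_induction_on generalizing t with
  | _ n ih =>
  rcases lt_or_ge t.card 2 with h1 | h2
  · exact Or.inl (ht.inducedIsPath_of_card_lt_two h1)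
  obtain ⟨a, hat, hs⟩ := ht.exists_isTube_erase h2
  obtain ⟨b, hb⟩ := hs.1
  obtain ⟨x₀, -, hx₀, y, hyt, hy, hx₀y⟩ :=
    ht.exists_adj_boundary (t.erase a) (Finset.mem_of_mem_erase hb) hb hat
      (Finset.notMem_erase a t)
  obtain rfl : y = a := by_contra fun hya => hy (Finset.mem_erase.mpr ⟨hya, hyt⟩)
  rw [← Finset.insert_erase hat]
  rcases ih _ (hn ▸ Finset.card_erase_lt_of_mem hat) hs rfl with hp | h3
  · obtain ⟨l, hl, hlp⟩ := inducedIsPath_iff.mp hp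
    have hyl : y ∉ l := fun hyl => Finset.notMem_erase y t (hl ▸ List.mem_toFinset.mpr hyl)
    rw [← hl] at hx₀ ⊢
    exact hlp.inducedIsPath_insert_or_three_le_ndCount hyl (List.mem_toFinset.mp hx₀) hx₀y.symm
  · exact Or.inr (hs.three_le_ndCount_insert (Finset.notMem_erase y t) hx₀ hx₀y.symm h3)

end PathOrThreeEnds

section Counting

variable {V : Type*} [DecidableEq V] {G : SimpleGraph V} {t : Finset V}

lemma IsTube.two_le_ndCount (ht : IsTube G t) (h2 : 2 ≤ t.card) : 2 ≤ ndCount G t := by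
  rcases ht.inducedIsPath_or_three_le_ndCount with hp | h3
  · exact (hp.ndCount_eq_two h2).ge
  · omega

lemma IsTube.ndCount_eq_two_iff (ht : IsTube G t) (h2 : 2 ≤ t.card) :
    ndCount G t = 2 ↔ InducedIsPath G t :=
  ⟨fun h => ht.inducedIsPath_or_three_le_ndCount.resolve_right (by omega),
    fun hp => hp.ndCount_eq_two h2⟩

lemma IsTube.choose_ndCount_two_eq_one_iff (ht : IsTube G t) (h2 : 2 ≤ t.card) :
    (ndCount G t).choose 2 = 1 ↔ InducedIsPath G t := by
  rw [← ht.ndCount_eq_two_iff h2]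
  refine ⟨fun h => ?_, fun h => by rw [h]; rfl⟩
  by_contra hne
  have h3 : 3 ≤ ndCount G t := by have := ht.two_le_ndCount h2; omega
  have := Nat.choose_le_choose 2 h3
  rw [h] at this
  exact absurd this (by decide)

lemma IsTube.one_le_choose_ndCount_two (ht : IsTube G t) (h2 : 2 ≤ t.card) :
    1 ≤ (ndCount G t).choose 2 :=
  Nat.choose_pos (ht.two_le_ndCount h2)

end Counting

section TubeCount

variable {V : Type*} [Fintype V] {G : SimpleGraph V}

lemma mem_tubes {t : Finset V} : t ∈ tubes G ↔ IsTube G t := by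
  simp [tubes]

variable [DecidableEq V]

lemma disjointUnionOfPaths_iff :
    DisjointUnionOfPaths G ↔ ∀ t, IsTube G t → 2 ≤ t.card → InducedIsPath G t := by
  refine ⟨fun h t ht _ => ?_, fun h K hK _ => ?_⟩
  · obtain ⟨K, htK, hK⟩ := (Set.toFinite {K : Finset V | IsTube G K}).exists_le_maximal ht
    exact (h K hK.1 fun C hC hKC => hKC.antisymm (hK.2 hC hKC)).of_isTube_subset ht htK
  · rcases lt_or_ge K.card 2 with h1 | h2
    · exact hK.inducedIsPath_of_card_lt_two h1
    · exact h K hK h2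

lemma sum_choose_ndCount_tubes :
    ∑ t ∈ tubes G, (ndCount G t).choose 2 =
      ∑ t ∈ (tubes G).filter (fun t => 2 ≤ t.card), (ndCount G t).choose 2 := by
  refine (Finset.sum_filter_of_ne fun t _ h => ?_).symm
  have := ndCount_le_card G t
  have := Nat.choose_eq_zero_iff.not.mp h
  omega

lemma card_tubes_sub_card :
    (tubes G).card - Fintype.card V = ((tubes G).filter (fun t => 2 ≤ t.card)).card := by
  have hsingle : (tubes G).filter (fun t => ¬ 2 ≤ t.card) = Finset.univ.image ({·}) := by
    ext t
    simp only [Finset.mem_filter, mem_tubes, Finset.mem_image, Finset.mem_univ, true_and]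
    constructor
    · rintro ⟨ht, h2⟩
      obtain ⟨v, rfl⟩ := ht.exists_eq_singleton_of_card_lt_two (by omega)
      exact ⟨v, rfl⟩
    · rintro ⟨v, rfl⟩
      exact ⟨isTube_singleton_s19 G v, by simp⟩
  have := Finset.card_filter_add_card_filter_not (s := tubes G) (p := fun t => 2 ≤ t.card)
  rw [hsingle, Finset.card_image_of_injective _ Finset.singleton_injective,
    Finset.card_univ] at this
  omega

end TubeCount

theorem stmt19 (G : SimpleGraph V) :
    (∀ t : Finset V, IsTube G t → 2 ≤ t.card →
      2 ≤ ndCount G t ∧ (ndCount G t = 2 ↔ InducedIsPath G t)) ∧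
    ((∑ t ∈ tubes G, Nat.choose (ndCount G t) 2 = (tubes G).card - Fintype.card V) ↔
      DisjointUnionOfPaths G) ∧
    (¬ DisjointUnionOfPaths G →
      (tubes G).card - Fintype.card V < ∑ t ∈ tubes G, Nat.choose (ndCount G t) 2) := by
  rw [sum_choose_ndCount_tubes, card_tubes_sub_card]
  set B := (tubes G).filter fun t => 2 ≤ t.card
  have hB : ∀ t ∈ B, IsTube G t ∧ 2 ≤ t.card := fun t ht => by
    simpa only [B, Finset.mem_filter, mem_tubes] using ht
  have hle : ∀ t ∈ B, 1 ≤ (ndCount G t).choose 2 := fun t ht =>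
    (hB t ht).1.one_le_choose_ndCount_two (hB t ht).2
  have hiff : ∑ t ∈ B, (ndCount G t).choose 2 = B.card ↔ DisjointUnionOfPaths G := by
    rw [Finset.card_eq_sum_ones, eq_comm, Finset.sum_eq_sum_iff_of_le hle,
      disjointUnionOfPaths_iff]
    refine ⟨fun h t ht h2 => ?_, fun h t htB => ?_⟩
    · have htB : t ∈ B := Finset.mem_filter.mpr ⟨mem_tubes.mpr ht, h2⟩
      exact (ht.choose_ndCount_two_eq_one_iff h2).mp (h t htB).symm
    · exact (((hB t htB).1.choose_ndCount_two_eq_one_iff (hB t htB).2).mpr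
        (h t (hB t htB).1 (hB t htB).2)).symm
  have hcard_le : B.card ≤ ∑ t ∈ B, (ndCount G t).choose 2 := by
    rw [Finset.card_eq_sum_ones]
    exact Finset.sum_le_sum hle
  exact ⟨fun t ht h2 => ⟨ht.two_le_ndCount h2, ht.ndCount_eq_two_iff h2⟩, hiff,
    fun hnot => hcard_le.lt_of_ne fun h => hnot (hiff.mp h.symm)⟩
end
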